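/- arXiv:2510.18494 — 8 statements merged into one kernel-verified Lean document; each statement's English description precedes it below -/
import Mathlib

section
/- Let G be a connected d-regular graph on N vertices. In any FAT k-coloring of G with k > 1, all coloring classes have the same size N/k; in particular k divides N. -/
open Finset
open scoped Classical

/-- A FAT `k`-coloring of `G`: a surjective coloring `c : V → Fin k` (so the `k`
coloring classes partition `V`) with a parameter `α ∈ [0,1]` such that every vertex `v`
has exactly `α·deg v` neighbors in each class other than its own, and
`β·deg v = (1-(k-1)α)·deg v` neighbors in its own class. -/
def IsFATColoring {V : Type*} [Fintype V] (G : SimpleGraph V) (k : ℕ)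
    (c : V → Fin k) (α : ℝ) : Prop :=
  Function.Surjective c ∧ 0 ≤ α ∧ α ≤ 1 ∧
    ∀ v : V, ∀ i : Fin k,
      ((((G.neighborFinset v).filter (fun w => c w = i)).card : ℝ)) =
        (if c v = i then 1 - ((k : ℝ) - 1) * α else α) * (G.degree v : ℝ)

/-- The FAT chromatic number: the largest `k` such that `G` admits a FAT `k`-coloring. -/
noncomputable def fatChromatic {V : Type*} [Fintype V] (G : SimpleGraph V) : ℕ :=
  sSup {k | ∃ c : V → Fin k, ∃ α : ℝ, IsFATColoring G k c α}

lemma fat_double_count {V : Type*} [Fintype V] (G : SimpleGraph V) {k : ℕ}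
    (c : V → Fin k) (i j : Fin k) :
    ∑ v ∈ univ.filter (fun v => c v = i),
      ((G.neighborFinset v).filter (fun w => c w = j)).card
  = ∑ w ∈ univ.filter (fun w => c w = j),
      ((G.neighborFinset w).filter (fun v => c v = i)).card := by
  classical
  simp only [card_filter, sum_filter, SimpleGraph.neighborFinset_eq_filter]
  have E : ∀ (i j : Fin k),
      (∑ v : V, if c v = i then ∑ w : V, if G.Adj v w then if c w = j then 1 else 0 else 0 else 0)
      = ∑ v : V, ∑ w : V, if c v = i ∧ c w = j ∧ G.Adj v w then 1 else 0 := by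
    intro i j
    refine Finset.sum_congr rfl fun v _ => ?_
    by_cases h1 : c v = i
    · simp only [h1, if_true, true_and]
      refine Finset.sum_congr rfl fun w _ => ?_
      by_cases h2 : G.Adj v w <;> by_cases h3 : c w = j <;> simp [h2, h3]
    · simp [h1]
  rw [E i j, E j i, Finset.sum_comm]
  refine Finset.sum_congr rfl fun y _ => Finset.sum_congr rfl fun x _ =>
    if_congr ?_ rfl rfl
  constructor <;> rintro ⟨a, b, cc⟩ <;> exact ⟨b, a, cc.symm⟩

theorem fat_regular_classes_equal {V : Type*} [Fintype V] (G : SimpleGraph V)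
    (d k : ℕ) (hconn : G.Connected) (hreg : G.IsRegularOfDegree d)
    (c : V → Fin k) (α : ℝ) (h : IsFATColoring G k c α) (hk : 1 < k) :
    (∀ i : Fin k, (univ.filter fun v => c v = i).card = Fintype.card V / k) ∧
      k ∣ Fintype.card V := by
  classical
  obtain ⟨hsurj, hα0, hα1, hcond⟩ := h
  by_cases h0 : α * (d : ℝ) = 0
  · exfalso
    have hsame : ∀ u v, G.Adj u v → c u = c v := by
      intro u v huv
      by_contra hne
      have hc := hcond u (c v)
      rw [if_neg (fun hh => hne hh), hreg u] at hc
      have hmem : v ∈ (G.neighborFinset u).filter (fun w => c w = c v) := by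
        simp [huv]
      have hpos : 0 < (((G.neighborFinset u).filter (fun w => c w = c v)).card : ℝ) := by
        exact_mod_cast Finset.card_pos.2 ⟨v, hmem⟩
      rw [hc, h0] at hpos
      exact lt_irrefl _ hpos
    have hconst : ∀ u v : V, c u = c v := by
      intro u v
      obtain ⟨w⟩ := hconn.preconnected u v
      induction w with
      | nil => rfl
      | cons h p ih => exact (hsame _ _ h).trans ih
    obtain ⟨u, hu⟩ := hsurj ⟨0, by omega⟩
    obtain ⟨v, hv⟩ := hsurj ⟨1, hk⟩
    have : (⟨0, by omega⟩ : Fin k) = ⟨1, hk⟩ := by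
      rw [← hu, ← hv]; exact hconst u v
    simp [Fin.mk.injEq] at this
  · have hsize : ∀ i j : Fin k,
        (univ.filter fun v => c v = i).card = (univ.filter fun v => c v = j).card := by
      intro i j
      rcases eq_or_ne i j with rfl | hij
      · rfl
      have key := fat_double_count G c i j
      have hL : ∀ v ∈ univ.filter (fun v => c v = i),
          (((G.neighborFinset v).filter (fun w => c w = j)).card : ℝ) = α * d := by
        intro v hv
        simp only [mem_filter] at hv
        have := hcond v j
        rw [if_neg (by rw [hv.2]; exact hij), hreg v] at this
        exact this
      have hR : ∀ w ∈ univ.filter (fun w => c w = j),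
          (((G.neighborFinset w).filter (fun v => c v = i)).card : ℝ) = α * d := by
        intro w hw
        simp only [mem_filter] at hw
        have := hcond w i
        rw [if_neg (by rw [hw.2]; exact fun e => hij e.symm), hreg w] at this
        exact this
      have hkey : α * d * ((univ.filter fun v => c v = i).card : ℝ)
          = α * d * ((univ.filter fun v => c v = j).card : ℝ) := by
        have e1 : (∑ v ∈ univ.filter (fun v => c v = i),
            (((G.neighborFinset v).filter (fun w => c w = j)).card : ℝ))
            = α * d * ((univ.filter fun v => c v = i).card : ℝ) := by
          rw [Finset.sum_congr rfl hL, Finset.sum_const, nsmul_eq_mul, mul_comm]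
        have e2 : (∑ w ∈ univ.filter (fun w => c w = j),
            (((G.neighborFinset w).filter (fun v => c v = i)).card : ℝ))
            = α * d * ((univ.filter fun v => c v = j).card : ℝ) := by
          rw [Finset.sum_congr rfl hR, Finset.sum_const, nsmul_eq_mul, mul_comm]
        rw [← e1, ← e2]
        exact_mod_cast congrArg (Nat.cast : ℕ → ℝ) key
      have := mul_left_cancel₀ h0 hkey
      exact_mod_cast this
    have hsum : ∑ i : Fin k, (univ.filter fun v => c v = i).card = Fintype.card V := by
      rw [← Finset.card_univ]
      exact (Finset.card_eq_sum_card_fiberwise (fun v _ => Finset.mem_univ (c v))).symm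
    set i0 : Fin k := ⟨0, by omega⟩
    have hN : Fintype.card V = k * (univ.filter fun v => c v = i0).card := by
      rw [← hsum, Finset.sum_congr rfl (fun i _ => hsize i i0), Finset.sum_const,
        Finset.card_univ, Fintype.card_fin, smul_eq_mul]
    constructor
    · intro i
      rw [hsize i i0, hN, Nat.mul_div_cancel_left _ (by omega)]
    · exact ⟨_, hN⟩
end

section
/- Let G be a connected graph in which gcd{deg(v) : v ∈ V} = 1. Then exactly one of the following holds: χ^FAT(G) = 1 and G is not bipartite, or χ^FAT(G) = 2 and G is bipartite. -/
open Finset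
open scoped Classical

/-- Bézout-style lemma: if `α * f v` is a natural number for all `v ∈ s`, then
`α * gcd` is an integer. -/
private lemma fat_bezout {V : Type*} (f : V → ℕ) (α : ℝ) (s : Finset V)
    (h : ∀ v ∈ s, ∃ m : ℕ, α * (f v : ℝ) = m) :
    ∃ m : ℤ, α * ((s.gcd f : ℕ) : ℝ) = m := by
  classical
  induction s using Finset.induction with
  | empty => exact ⟨0, by simp⟩
  | @insert a s ha ih =>
    obtain ⟨m₁, h₁⟩ := h a (Finset.mem_insert_self a s)
    obtain ⟨m₂, h₂⟩ := ih (fun v hv => h v (Finset.mem_insert_of_mem hv))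
    refine ⟨(m₁ : ℤ) * Nat.gcdA (f a) (s.gcd f) + (m₂ : ℤ) * Nat.gcdB (f a) (s.gcd f), ?_⟩
    rw [Finset.gcd_insert]
    have key : ((GCDMonoid.gcd (f a) (s.gcd f) : ℕ) : ℝ) =
        (f a : ℝ) * (Nat.gcdA (f a) (s.gcd f) : ℝ) +
        ((s.gcd f : ℕ) : ℝ) * (Nat.gcdB (f a) (s.gcd f) : ℝ) := by
      have := Nat.gcd_eq_gcd_ab (f a) (s.gcd f)
      exact_mod_cast congrArg (fun z : ℤ => (z : ℝ)) this
    rw [key]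
    push_cast
    linear_combination ((Nat.gcdA (f a) (s.gcd f) : ℝ)) * h₁ +
      ((Nat.gcdB (f a) (s.gcd f) : ℝ)) * h₂

private lemma fat_deg_pos {V : Type*} [Fintype V] {G : SimpleGraph V}
    (hconn : G.Connected) (hedge : G.edgeSet.Nonempty) (v : V) : 0 < G.degree v := by
  classical
  obtain ⟨e, he⟩ := hedge
  induction e using Sym2.ind with
  | _ a b =>
    rw [SimpleGraph.mem_edgeSet] at he
    by_cases hva : v = a
    · subst hva
      exact G.degree_pos_iff_exists_adj v |>.mpr ⟨b, he⟩
    · obtain ⟨w⟩ := hconn v a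
      cases w with
      | nil => exact absurd rfl hva
      | cons h p => exact G.degree_pos_iff_exists_adj v |>.mpr ⟨_, h⟩

/-- If `α = 0` and `k ≥ 2`, the FAT condition plus connectivity gives a contradiction. -/
private lemma fat_alpha_zero {V : Type*} [Fintype V] {G : SimpleGraph V}
    (hconn : G.Connected) {k : ℕ} (hk : 2 ≤ k) {c : V → Fin k}
    (hF : IsFATColoring G k c 0) : False := by
  classical
  obtain ⟨hsurj, -, -, hcond⟩ := hF
  have hadj : ∀ u w : V, G.Adj u w → c w = c u := by
    intro u w huw
    have h := hcond u (c u)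
    rw [if_pos rfl] at h
    have hcard : ((G.neighborFinset u).filter (fun x => c x = c u)).card = G.degree u := by
      have : (((G.neighborFinset u).filter (fun x => c x = c u)).card : ℝ)
          = (G.degree u : ℝ) := by rw [h]; ring
      exact_mod_cast this
    have hsub : (G.neighborFinset u).filter (fun x => c x = c u) ⊆ G.neighborFinset u :=
      Finset.filter_subset _ _
    have heq : (G.neighborFinset u).filter (fun x => c x = c u) = G.neighborFinset u := by
      apply Finset.eq_of_subset_of_card_le hsub
      rw [hcard, G.card_neighborFinset_eq_degree]
    have hw : w ∈ (G.neighborFinset u).filter (fun x => c x = c u) := by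
      rw [heq, SimpleGraph.mem_neighborFinset]; exact huw
    exact (Finset.mem_filter.mp hw).2
  have hwalk : ∀ (u v : V) (_ : G.Walk u v), c u = c v := by
    intro u v p
    induction p with
    | nil => rfl
    | cons h p ih => exact (hadj _ _ h).symm.trans ih
  have hV : Nonempty V := by
    obtain ⟨i⟩ : Nonempty (Fin k) := ⟨⟨0, by omega⟩⟩
    obtain ⟨v, -⟩ := hsurj i
    exact ⟨v⟩
  obtain ⟨v₀⟩ := hV
  have hlt : 1 < Fintype.card (Fin k) := by rw [Fintype.card_fin]; omega
  obtain ⟨i, hi⟩ := Fintype.exists_ne_of_one_lt_card hlt (c v₀)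
  obtain ⟨u, hu⟩ := hsurj i
  obtain ⟨w⟩ := hconn u v₀
  exact hi (hu ▸ hwalk u v₀ w)

/-- With `k ≥ 2` and gcd of degrees equal to 1, the parameter `α` is `0` or `1`. -/
private lemma fat_alpha_int {V : Type*} [Fintype V] {G : SimpleGraph V}
    (hgcd : univ.gcd (fun v => G.degree v) = 1)
    {k : ℕ} (hk : 2 ≤ k) {c : V → Fin k} {α : ℝ}
    (hF : IsFATColoring G k c α) : α = 0 ∨ α = 1 := by
  classical
  obtain ⟨hsurj, h0, h1, hcond⟩ := hF
  have hnat : ∀ v ∈ (univ : Finset V), ∃ m : ℕ, α * (G.degree v : ℝ) = m := by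
    intro v _
    have hlt : 1 < Fintype.card (Fin k) := by rw [Fintype.card_fin]; omega
    obtain ⟨i, hi⟩ := Fintype.exists_ne_of_one_lt_card hlt (c v)
    have h := hcond v i
    rw [if_neg (fun hh => hi hh.symm)] at h
    exact ⟨_, h.symm⟩
  obtain ⟨m, hm⟩ := fat_bezout (fun v => G.degree v) α univ hnat
  rw [hgcd] at hm
  simp only [Nat.cast_one, mul_one] at hm
  subst hm
  have hm0 : (0 : ℤ) ≤ m := by exact_mod_cast h0
  have hm1 : m ≤ 1 := by exact_mod_cast h1
  interval_cases m
  · left; norm_num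
  · right; norm_num

private lemma fat_le_two {V : Type*} [Fintype V] {G : SimpleGraph V}
    (hconn : G.Connected) (hedge : G.edgeSet.Nonempty)
    (hgcd : univ.gcd (fun v => G.degree v) = 1)
    {k : ℕ} (hk : ∃ c : V → Fin k, ∃ α : ℝ, IsFATColoring G k c α) : k ≤ 2 := by
  classical
  by_contra hk3
  push_neg at hk3
  obtain ⟨c, α, hF⟩ := hk
  have hk2 : 2 ≤ k := by omega
  rcases fat_alpha_int hgcd hk2 hF with rfl | rfl
  · exact fat_alpha_zero hconn hk2 hF
  · obtain ⟨hsurj, -, -, hcond⟩ := hF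
    obtain ⟨v⟩ : Nonempty V := by
      obtain ⟨v, -⟩ := hsurj ⟨0, by omega⟩; exact ⟨v⟩
    have h := hcond v (c v)
    rw [if_pos rfl] at h
    have hdeg : (0 : ℝ) < (G.degree v : ℝ) := by
      exact_mod_cast fat_deg_pos hconn hedge v
    have hk3' : (3 : ℝ) ≤ (k : ℝ) := by exact_mod_cast hk3
    have hcard : (0 : ℝ) ≤ (((G.neighborFinset v).filter (fun w => c w = c v)).card : ℝ) := by
      positivity
    rw [h] at hcard
    nlinarith

theorem fat_gcd_one {V : Type*} [Fintype V] (G : SimpleGraph V)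
    (hconn : G.Connected) (hedge : G.edgeSet.Nonempty)
    (hgcd : univ.gcd (fun v => G.degree v) = 1) :
    Xor' (fatChromatic G = 1 ∧ ¬ G.Colorable 2)
      (fatChromatic G = 2 ∧ G.Colorable 2) := by
  classical
  set S : Set ℕ := {k | ∃ c : V → Fin k, ∃ α : ℝ, IsFATColoring G k c α} with hS
  have hV : Nonempty V := by
    obtain ⟨e, he⟩ := hedge
    induction e using Sym2.ind with
    | _ a b => exact ⟨a⟩
  -- 1 ∈ S
  have h1S : 1 ∈ S := by
    refine ⟨fun _ => 0, 0, ?_, le_refl 0, zero_le_one, ?_⟩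
    · intro i
      obtain ⟨v⟩ := hV
      exact ⟨v, Subsingleton.elim _ _⟩
    · intro v i
      rw [if_pos (Subsingleton.elim _ _)]
      rw [Finset.filter_true_of_mem (fun w _ => Subsingleton.elim _ _)]
      rw [G.card_neighborFinset_eq_degree]
      norm_num
  -- 2 ∈ S ↔ Colorable 2
  have h2S : 2 ∈ S ↔ G.Colorable 2 := by
    constructor
    · rintro ⟨c, α, hF⟩
      rcases fat_alpha_int hgcd le_rfl hF with rfl | rfl
      · exact absurd (fat_alpha_zero hconn le_rfl hF) (fun h => h)
      · obtain ⟨hsurj, -, -, hcond⟩ := hF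
        refine ⟨SimpleGraph.Coloring.mk c ?_⟩
        intro v w hvw
        have h := hcond v (c v)
        rw [if_pos rfl] at h
        have hzero : ((G.neighborFinset v).filter (fun x => c x = c v)).card = 0 := by
          have : (((G.neighborFinset v).filter (fun x => c x = c v)).card : ℝ) = 0 := by
            rw [h]; norm_num
          exact_mod_cast this
        intro hcw
        have hw : w ∈ (G.neighborFinset v).filter (fun x => c x = c v) := by
          rw [Finset.mem_filter, SimpleGraph.mem_neighborFinset]
          exact ⟨hvw, hcw.symm⟩
        rw [Finset.card_eq_zero] at hzero
        simp [hzero] at hw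
    · rintro ⟨C⟩
      have fin2 : ∀ (x y z : Fin 2), x ≠ z → y ≠ z → x = y := by decide
      have fin2' : ∀ (i x y : Fin 2), x ≠ y → i = x ∨ i = y := by decide
      refine ⟨C, 1, ?_, zero_le_one, le_refl 1, ?_⟩
      · -- surjectivity
        obtain ⟨e, he⟩ := hedge
        induction e using Sym2.ind with
        | _ a b =>
          rw [SimpleGraph.mem_edgeSet] at he
          intro i
          rcases fin2' i (C a) (C b) (C.valid he) with h | h
          · exact ⟨a, h.symm⟩
          · exact ⟨b, h.symm⟩
      · intro v i
        by_cases hvi : C v = i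
        · rw [if_pos hvi]
          have : (G.neighborFinset v).filter (fun w => C w = i) = ∅ := by
            ext w
            simp only [Finset.mem_filter, SimpleGraph.mem_neighborFinset,
              Finset.notMem_empty, iff_false, not_and]
            intro hw hcw
            exact C.valid hw (by rw [hvi, hcw])
          rw [this]
          norm_num
        · rw [if_neg hvi]
          have : (G.neighborFinset v).filter (fun w => C w = i) = G.neighborFinset v := by
            apply Finset.filter_true_of_mem
            intro w hw
            rw [SimpleGraph.mem_neighborFinset] at hw
            exact fin2 (C w) i (C v) (Ne.symm (C.valid hw)) (fun h => hvi h.symm)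
          rw [this, G.card_neighborFinset_eq_degree]
          norm_num
  have hbdd : BddAbove S := ⟨2, fun k hk => fat_le_two hconn hedge hgcd hk⟩
  have hne : S.Nonempty := ⟨1, h1S⟩
  by_cases hcol : G.Colorable 2
  · right
    refine ⟨⟨?_, hcol⟩, ?_⟩
    · apply le_antisymm
      · exact csSup_le hne (fun k hk => fat_le_two hconn hedge hgcd hk)
      · exact le_csSup hbdd (h2S.mpr hcol)
    · rintro ⟨-, hn⟩
      exact hn hcol
  · left
    refine ⟨⟨?_, hcol⟩, ?_⟩
    · apply le_antisymm
      · apply csSup_le hne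
        intro k hk
        have hk2 := fat_le_two hconn hedge hgcd hk
        rcases Nat.lt_or_ge k 2 with h | h
        · omega
        · exfalso
          have : k = 2 := by omega
          exact hcol (h2S.mp (this ▸ hk))
      · exact le_csSup hbdd h1S
    · rintro ⟨-, hc⟩
      exact hcol hc
end

section
/- Let G be any graph and let k > 1. In any FAT k-coloring of G with parameter α > 0, all coloring classes have the same volume; in particular each class has volume 2|E|/k, and k divides 2|E|. -/
open Finset
open scoped Classical

/-- Double counting: edges from class `i` to class `j` equal edges from `j` to `i`. -/
lemma fat_swap {V : Type*} [Fintype V] (G : SimpleGraph V) {k : ℕ}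
    (c : V → Fin k) (i j : Fin k) :
    ∑ v ∈ univ.filter (fun v => c v = i),
        ((G.neighborFinset v).filter (fun w => c w = j)).card =
      ∑ v ∈ univ.filter (fun v => c v = j),
        ((G.neighborFinset v).filter (fun w => c w = i)).card := by
  have key : ∀ a b : Fin k,
      ∑ v ∈ univ.filter (fun v => c v = a),
          ((G.neighborFinset v).filter (fun w => c w = b)).card =
        ∑ v : V, ∑ w : V, if c v = a ∧ G.Adj v w ∧ c w = b then 1 else 0 := by
    intro a b
    rw [Finset.sum_filter]
    refine Finset.sum_congr rfl fun v _ => ?_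
    rw [SimpleGraph.neighborFinset_eq_filter, Finset.filter_filter, Finset.card_filter]
    by_cases hv : c v = a <;> simp [hv]
  rw [key, key, Finset.sum_comm]
  refine Finset.sum_congr rfl fun v _ => Finset.sum_congr rfl fun w _ => ?_
  have : G.Adj w v ↔ G.Adj v w := G.adj_comm w v
  by_cases h1 : G.Adj v w <;> by_cases h2 : c v = i <;> by_cases h3 : c w = j <;>
    simp_all [G.adj_comm, and_comm, and_left_comm]

theorem fat_classes_equal_volume {V : Type*} [Fintype V] (G : SimpleGraph V)
    (k : ℕ) (c : V → Fin k) (α : ℝ) (h : IsFATColoring G k c α)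
    (hk : 1 < k) (hα : 0 < α) :
    (∀ i j : Fin k,
        ∑ v ∈ univ.filter (fun v => c v = i), G.degree v =
          ∑ v ∈ univ.filter (fun v => c v = j), G.degree v) ∧
      (∀ i : Fin k,
        (∑ v ∈ univ.filter (fun v => c v = i), G.degree v) * k =
          2 * G.edgeFinset.card) ∧
      k ∣ 2 * G.edgeFinset.card := by
  obtain ⟨hsurj, hα0, hα1, hcond⟩ := h
  -- volumes are pairwise equal
  have volne : ∀ i j : Fin k, i ≠ j →
      ∑ v ∈ univ.filter (fun v => c v = i), G.degree v =
        ∑ v ∈ univ.filter (fun v => c v = j), G.degree v := by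
    intro i j hij
    have hswap := fat_swap G c i j
    have hreal : (α : ℝ) * ∑ v ∈ univ.filter (fun v => c v = i), (G.degree v : ℝ) =
        α * ∑ v ∈ univ.filter (fun v => c v = j), (G.degree v : ℝ) := by
      have l1 : ((∑ v ∈ univ.filter (fun v => c v = i),
          ((G.neighborFinset v).filter (fun w => c w = j)).card : ℕ) : ℝ) =
          α * ∑ v ∈ univ.filter (fun v => c v = i), (G.degree v : ℝ) := by
        push_cast
        rw [Finset.mul_sum]
        refine Finset.sum_congr rfl fun v hv => ?_
        simp only [Finset.mem_filter] at hv
        have := hcond v j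
        rw [hv.2] at this
        rw [this, if_neg hij]
      have l2 : ((∑ v ∈ univ.filter (fun v => c v = j),
          ((G.neighborFinset v).filter (fun w => c w = i)).card : ℕ) : ℝ) =
          α * ∑ v ∈ univ.filter (fun v => c v = j), (G.degree v : ℝ) := by
        push_cast
        rw [Finset.mul_sum]
        refine Finset.sum_congr rfl fun v hv => ?_
        simp only [Finset.mem_filter] at hv
        have := hcond v i
        rw [hv.2] at this
        rw [this, if_neg (fun hh => hij hh.symm)]
      rw [← l1, ← l2, hswap]
    have := mul_left_cancel₀ (ne_of_gt hα) hreal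
    exact_mod_cast this
  have voleq : ∀ i j : Fin k,
      ∑ v ∈ univ.filter (fun v => c v = i), G.degree v =
        ∑ v ∈ univ.filter (fun v => c v = j), G.degree v := by
    intro i j
    by_cases hij : i = j
    · rw [hij]
    · exact volne i j hij
  have total : ∑ i : Fin k, ∑ v ∈ univ.filter (fun v => c v = i), G.degree v =
      2 * G.edgeFinset.card := by
    rw [← SimpleGraph.sum_degrees_eq_twice_card_edges]
    exact Finset.sum_fiberwise _ _ _
  have key : ∀ i : Fin k,
      (∑ v ∈ univ.filter (fun v => c v = i), G.degree v) * k = 2 * G.edgeFinset.card := by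
    intro i
    rw [← total]
    rw [Finset.sum_congr rfl fun j _ => (voleq j i : _)]
    simp [Finset.sum_const, mul_comm]
  refine ⟨voleq, key, ?_⟩
  exact ⟨_, by rw [← key ⟨0, Nat.lt_of_lt_of_le Nat.zero_lt_one hk.le⟩, mul_comm]⟩
end

section
/- Let μ be the maximum multiplicity among eigenvalues of the normalized Laplacian L(G) of a graph G without isolated vertices. If G admits a FAT k-coloring, then k ≤ μ + 1; in particular χ^FAT(G) ≤ μ + 1. -/
open Finset
open scoped Classical

/-- The normalized Laplacian `L = I - D⁻¹A` of a graph. -/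
noncomputable def normLaplacian {V : Type*} [Fintype V] [DecidableEq V]
    (G : SimpleGraph V) : Matrix V V ℝ :=
  fun v w => (if v = w then 1 else 0) - (if G.Adj v w then ((G.degree v : ℝ))⁻¹ else 0)

theorem fat_le_max_multiplicity_add_one {V : Type*} [Fintype V] [DecidableEq V]
    (G : SimpleGraph V) (hdeg : ∀ v : V, 0 < G.degree v) (μ : ℕ)
    (hμ : ∀ t : ℝ,
      Module.finrank ℝ
        (Module.End.eigenspace (Matrix.toLin' (normLaplacian G)) t) ≤ μ) :
    (∀ (k : ℕ) (c : V → Fin k) (α : ℝ), IsFATColoring G k c α → k ≤ μ + 1) ∧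
      fatChromatic G ≤ μ + 1 := by
  have main : ∀ (k : ℕ) (c : V → Fin k) (α : ℝ), IsFATColoring G k c α → k ≤ μ + 1 := by
    intro k c α hcol
    obtain ⟨hsurj, h0, h1, hc⟩ := hcol
    match k, c, hc, hsurj with
    | 0, c, hc, hsurj => omega
    | (k+1), c, hc, hsurj =>
      set E := Module.End.eigenspace (Matrix.toLin' (normLaplacian G)) (((k:ℝ)+1) * α) with hE
      set e : Fin (k+1) → V → ℝ :=
        fun i v => (if c v = i then 1 else 0) - (if c v = 0 then 1 else 0) with he
      have key : ∀ i, Matrix.toLin' (normLaplacian G) (e i) = (((k:ℝ)+1) * α) • e i := by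
        intro i
        have hsum : ∀ j : Fin (k+1), ∀ v : V,
            (∑ w ∈ G.neighborFinset v, (if c w = j then (1:ℝ) else 0))
            = (if c v = j then 1 - ((k:ℝ)+1-1) * α else α) * (G.degree v : ℝ) := by
          intro j v
          rw [Finset.sum_boole]
          have := hc v j
          push_cast at this ⊢
          convert this using 2
        funext v
        have hdv : (G.degree v : ℝ) ≠ 0 := Nat.cast_ne_zero.mpr (hdeg v).ne'
        have hml : (Matrix.toLin' (normLaplacian G)) (e i) v
            = ∑ w, normLaplacian G v w * e i w := by
          simp [Matrix.toLin'_apply, Matrix.mulVec, dotProduct]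
        rw [hml]
        have expand : ∀ w, normLaplacian G v w * e i w
            = (if v = w then e i w else 0)
              - (if G.Adj v w then ((G.degree v : ℝ))⁻¹ * e i w else 0) := by
          intro w
          simp only [normLaplacian, sub_mul]
          congr 1
          · split <;> simp
          · split <;> simp
        simp only [expand]
        rw [Finset.sum_sub_distrib, Finset.sum_ite_eq (Finset.univ) v (fun w => e i w)]
        have h2 : (∑ w, if G.Adj v w then ((G.degree v : ℝ))⁻¹ * e i w else 0)
            = ((G.degree v : ℝ))⁻¹ * ∑ w ∈ G.neighborFinset v, e i w := by
          rw [Finset.mul_sum]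
          rw [← Finset.sum_filter]
          congr 1
          ext w
          simp [SimpleGraph.mem_neighborFinset]
        rw [h2]
        have h3 : (∑ w ∈ G.neighborFinset v, e i w)
            = ((if c v = i then 1 - ((k:ℝ)+1-1) * α else α)
              - (if c v = 0 then 1 - ((k:ℝ)+1-1) * α else α)) * (G.degree v : ℝ) := by
          simp only [he, Finset.sum_sub_distrib, hsum i v, hsum 0 v, sub_mul]
        rw [h3, mul_comm, mul_assoc, mul_inv_cancel₀ hdv, mul_one]
        simp only [he, Pi.smul_apply, smul_eq_mul, Finset.mem_univ, if_true]
        by_cases hiv : c v = i <;> by_cases h0v : c v = 0 <;> by_cases hi0 : i = 0 <;>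
          first
            | exact absurd (hiv.symm.trans h0v) hi0
            | exact absurd (h0v.symm.trans hi0.symm) (fun hh => hiv hh.symm)
            | (simp [hiv, h0v, hi0, Ne.symm hi0]; ring)
            | simp [hiv, h0v, hi0, Ne.symm hi0]
            | (simp [hiv, h0v, hi0]; ring)
            | simp [hiv, h0v, hi0]
      have mem : ∀ i, e i ∈ E := by
        intro i
        rw [hE, Module.End.mem_eigenspace_iff]
        exact key i
      have hli : LinearIndependent ℝ (fun i : {i : Fin (k+1) // i ≠ 0} => (⟨e i, mem i⟩ : E)) := by
        rw [Fintype.linearIndependent_iff]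
        intro g hg j
        obtain ⟨v, hv⟩ := hsurj j.1
        have := congrArg (fun x : E => (x : V → ℝ) v) hg
        simp only [AddSubmonoidClass.coe_finset_sum, Finset.sum_apply, SetLike.val_smul,
          Pi.smul_apply, smul_eq_mul, ZeroMemClass.coe_zero, Pi.zero_apply] at this
        have heval : ∀ i : {i : Fin (k+1) // i ≠ 0},
            e i.1 v = if i = j then 1 else 0 := by
          intro i
          have hj0 : (j : Fin (k+1)) ≠ 0 := j.2
          simp only [he, hv, if_neg hj0, sub_zero]
          by_cases h : i = j
          · simp [h]
          · have h' : (j : Fin (k+1)) ≠ (i : Fin (k+1)) :=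
              fun hh => h (Subtype.ext hh.symm)
            simp [h, h']
        rw [Finset.sum_congr rfl (fun i _ => by rw [heval i])] at this
        simpa using this
      have hcard : Fintype.card {i : Fin (k+1) // i ≠ 0} ≤ Module.finrank ℝ E :=
        hli.fintype_card_le_finrank
      have hcard2 : Fintype.card {i : Fin (k+1) // i ≠ 0} = k := by
        simp [Fintype.card_subtype_compl]
      have hfin := hμ (((k:ℝ)+1) * α)
      rw [← hE] at hfin
      omega
  exact ⟨main, csSup_le' (by rintro k ⟨c, α, h⟩; exact main k c α h)⟩
end

section
/- Let C_N be the cycle on N ≥ 3 vertices. Then χ^FAT(C_N) = 1 if N is odd and not divisible by 3, χ^FAT(C_N) = 2 if N is even and not divisible by 3, and χ^FAT(C_N) = 3 if 3 divides N. -/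
open Finset
open scoped Classical

/-- The cycle graph on `ZMod N`: `i ∼ j` iff they differ by `1`. -/
def cycleGraph' (N : ℕ) : SimpleGraph (ZMod N) :=
  SimpleGraph.fromRel (fun i j => i - j = 1)

section helpers

variable {N : ℕ} [NeZero N]

lemma cast_ne_zero' (hN : 3 ≤ N) {m : ℕ} (h0 : 0 < m) (hm : m < N) : ((m : ℕ) : ZMod N) ≠ 0 := by
  intro h
  rw [ZMod.natCast_eq_zero_iff] at h
  have := Nat.le_of_dvd h0 h
  omega

lemma one_ne_zero'' (hN : 3 ≤ N) : (1 : ZMod N) ≠ 0 := by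
  have := cast_ne_zero' (N := N) hN (m := 1) one_pos (by omega)
  simpa using this

lemma two_ne_zero'' (hN : 3 ≤ N) : (2 : ZMod N) ≠ 0 := by
  have := cast_ne_zero' (N := N) hN (m := 2) (by norm_num) (by omega)
  simpa using this

lemma adj_iff (hN : 3 ≤ N) (v w : ZMod N) :
    (cycleGraph' N).Adj v w ↔ (w = v + 1 ∨ w = v - 1) := by
  have h1 := one_ne_zero'' (N := N) hN
  constructor
  · rintro ⟨hne, h | h⟩
    · right; linear_combination -h
    · left; linear_combination h
  · rintro (rfl | rfl)
    · exact ⟨by intro h; exact h1 (by linear_combination -h), Or.inr (by ring)⟩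
    · exact ⟨by intro h; exact h1 (by linear_combination h), Or.inl (by ring)⟩

lemma nbhd (hN : 3 ≤ N) (v : ZMod N) :
    (cycleGraph' N).neighborFinset v = {v + 1, v - 1} := by
  ext w
  simp [SimpleGraph.mem_neighborFinset, adj_iff hN]

lemma pm_ne (hN : 3 ≤ N) (v : ZMod N) : v + 1 ≠ v - 1 := by
  intro h
  exact two_ne_zero'' hN (by linear_combination h)

lemma deg (hN : 3 ≤ N) (v : ZMod N) : (cycleGraph' N).degree v = 2 := by
  rw [← SimpleGraph.card_neighborFinset_eq_degree, nbhd hN v]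
  rw [Finset.card_insert_of_notMem (by simp [pm_ne hN v]), Finset.card_singleton]

lemma pair_filter (hN : 3 ≤ N) (v : ZMod N) (p : ZMod N → Prop) [DecidablePred p] :
    ((({v + 1, v - 1} : Finset (ZMod N)).filter p).card : ℝ) =
      (if p (v + 1) then 1 else 0) + (if p (v - 1) then 1 else 0) := by
  have h := pm_ne hN v
  rw [Finset.filter_insert, Finset.filter_singleton]
  split_ifs <;> simp_all <;> norm_num

/-- The key pointwise equation. -/
lemma cond' (hN : 3 ≤ N) {k : ℕ} {c : ZMod N → Fin k} {α : ℝ}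
    (h : IsFATColoring (cycleGraph' N) k c α) (v : ZMod N) (i : Fin k) :
    ((if c (v + 1) = i then (1:ℝ) else 0) + (if c (v - 1) = i then 1 else 0)) =
      (if c v = i then 1 - ((k : ℝ) - 1) * α else α) * 2 := by
  have := h.2.2.2 v i
  rw [nbhd hN v] at this
  rw [← pair_filter hN v (fun w => c w = i)]
  rw [this, deg hN v]
  norm_num

end helpers

section fin2

/-- parity forcing lemma on `Fin 2`. -/
lemma flip_gen {N : ℕ} [NeZero N] {c : ZMod N → Fin 2} {s : ZMod N}
    (h : ∀ v, c (v + s) ≠ c v) (hNs : (N : ℕ) • s = 0) : 2 ∣ N := by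
  have key : ∀ n : ℕ, (Even n → c (n • s) = c 0) ∧ (¬ Even n → c (n • s) ≠ c 0) := by
    intro n
    induction n with
    | zero => simp
    | succ n ih =>
      have hstep : c ((n + 1) • s) ≠ c (n • s) := by
        rw [succ_nsmul]; exact h _
      constructor
      · intro he
        have hn : ¬ Even n := by simpa [Nat.even_add_one] using he
        have := ih.2 hn
        revert hstep this
        generalize c ((n+1) • s) = a; generalize c (n • s) = b; generalize c 0 = d
        revert a b d; decide
      · intro he
        have hn : Even n := by simpa [Nat.even_add_one] using he
        have := ih.1 hn
        rw [this] at hstep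
        exact hstep
  by_contra hodd
  have : ¬ Even N := by rwa [even_iff_two_dvd]
  have := (key N).2 this
  rw [hNs] at this
  simp at this

end fin2

section classify

variable {N : ℕ} [NeZero N]

lemma const_of_step {k : ℕ} {c : ZMod N → Fin k} (h : ∀ v, c (v + 1) = c v) (v : ZMod N) :
    c v = c 0 := by
  have key : ∀ n : ℕ, c ((n : ℕ) : ZMod N) = c 0 := by
    intro n
    induction n with
    | zero => simp
    | succ n ih => push_cast; rw [h]; exact_mod_cast ih
  have := key v.val
  rwa [ZMod.natCast_rightInverse v] at this

lemma classify (hN : 3 ≤ N) {k : ℕ} {c : ZMod N → Fin k} {α : ℝ}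
    (h : IsFATColoring (cycleGraph' N) k c α) :
    k = 1 ∨ (k = 2 ∧ 2 ∣ N) ∨ (k = 3 ∧ 3 ∣ N) := by
  obtain ⟨hsurj, hα0, hα1, _⟩ := id h
  have E := cond' hN h
  rcases Nat.lt_or_ge k 2 with hk | hk
  · interval_cases k
    · exact (c 0).elim0
    · exact Or.inl rfl
  · have hex : ∀ a : Fin k, ∃ b : Fin k, b ≠ a := by
      intro a
      have : 1 < Fintype.card (Fin k) := by rw [Fintype.card_fin]; omega
      exact Fintype.exists_ne_of_one_lt_card this a
    obtain ⟨j, hj⟩ := hex (c 0)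
    have hE0 := E 0 j
    rw [if_neg (Ne.symm hj)] at hE0
    have hcase : α = 0 ∨ α = 1/2 ∨ α = 1 := by
      split_ifs at hE0
      · right; right; linarith
      · right; left; linarith
      · right; left; linarith
      · left; linarith
    rcases hcase with rfl | rfl | rfl
    · -- α = 0 : coloring constant, contradicting k ≥ 2
      exfalso
      have hstep : ∀ v, c (v + 1) = c v := by
        intro v
        by_contra hne
        have hE := E v (c (v + 1))
        rw [if_pos (show c (v+1) = c (v+1) from rfl),
          if_neg (show ¬ c v = c (v+1) from fun hh => hne hh.symm)] at hE
        split_ifs at hE <;> norm_num at hE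
      obtain ⟨v, rfl⟩ := hsurj j
      exact hj (const_of_step hstep v)
    · -- α = 1/2
      have hE1 := E 0 (c 0)
      rw [if_pos rfl] at hE1
      have hk3 : k ≤ 3 := by
        by_contra hk4
        push_neg at hk4
        have h4 : (4 : ℝ) ≤ k := by exact_mod_cast hk4
        split_ifs at hE1 <;> linarith
      interval_cases k
      · -- k = 2
        right; left; refine ⟨rfl, ?_⟩
        have hne2 : ∀ v : ZMod N, c (v + 2) ≠ c v := by
          intro v heq
          have hE := E (v + 1) (c v)
          rw [show (v+1)+1 = v+2 by ring, show (v+1)-1 = v by ring] at hE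
          rw [if_pos heq, if_pos (show c v = c v from rfl)] at hE
          split_ifs at hE <;> norm_num at hE
        exact flip_gen hne2 (by rw [nsmul_eq_mul, ZMod.natCast_self, zero_mul])
      · -- k = 3
        right; right; refine ⟨rfl, ?_⟩
        have hA : ∀ v : ZMod N, c (v + 1) ≠ c v := by
          intro v heq
          have hE := E v (c v)
          rw [if_pos (show c v = c v from rfl), if_pos heq] at hE
          split_ifs at hE <;> norm_num at hE
        have hB : ∀ v : ZMod N, c (v + 2) ≠ c v := by
          intro v heq
          have hE := E (v + 1) (c v)
          rw [show (v+1)+1 = v+2 by ring, show (v+1)-1 = v by ring] at hE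
          rw [if_pos heq, if_pos (show c v = c v from rfl), if_neg (hA v)] at hE
          norm_num at hE
        have h3 : ∀ v : ZMod N, c (v + 3) = c v := by
          intro v
          have d1 : c (v+1) ≠ c v := hA v
          have d2 : c (v+2) ≠ c (v+1) := by
            have := hA (v+1); rwa [show v+1+1 = v+2 by ring] at this
          have d3 : c (v+2) ≠ c v := hB v
          have d4 : c (v+3) ≠ c (v+2) := by
            have := hA (v+2); rwa [show v+2+1 = v+3 by ring] at this
          have d5 : c (v+3) ≠ c (v+1) := by
            have := hB (v+1); rwa [show v+1+2 = v+3 by ring] at this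
          have pigeon : ∀ a b d e : Fin 3,
              d = e ∨ b = d ∨ b = e ∨ a = b ∨ a = d ∨ a = e := by decide
          have := pigeon (c (v+3)) (c (v+2)) (c (v+1)) (c v)
          tauto
        have key : ∀ m : ℕ, ∀ v : ZMod N, c (v + ((3 * m : ℕ) : ZMod N)) = c v := by
          intro m
          induction m with
          | zero => simp
          | succ m ih =>
            intro v
            have e : ((3 * (m+1) : ℕ) : ZMod N) = ((3*m : ℕ) : ZMod N) + 3 := by
              push_cast; ring
            rw [e, show v + (((3*m:ℕ):ZMod N) + 3) = (v + ((3*m:ℕ):ZMod N)) + 3 by ring,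
              h3, ih]
        have hNm : c (((N % 3 : ℕ) : ZMod N)) = c 0 := by
          have e : ((N % 3 : ℕ) : ZMod N) + ((3 * (N / 3) : ℕ) : ZMod N) = 0 := by
            rw [← Nat.cast_add, show N % 3 + 3 * (N / 3) = N from by omega]
            exact ZMod.natCast_self N
          calc c (((N % 3 : ℕ) : ZMod N))
              = c (((N % 3 : ℕ) : ZMod N) + ((3 * (N / 3) : ℕ) : ZMod N)) := (key _ _).symm
            _ = c 0 := by rw [e]
        have hm : N % 3 = 0 ∨ N % 3 = 1 ∨ N % 3 = 2 := by omega
        rcases hm with hm | hm | hm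
        · omega
        · exfalso
          rw [hm] at hNm
          have := hA 0
          rw [zero_add] at this
          exact this (by simpa using hNm)
        · exfalso
          rw [hm] at hNm
          have := hB 0
          rw [zero_add] at this
          exact this (by simpa using hNm)
    · -- α = 1
      have hE1 := E 0 (c 0)
      rw [if_pos rfl] at hE1
      have hk2 : k ≤ 2 := by
        by_contra hk3
        push_neg at hk3
        have h3' : (3 : ℝ) ≤ k := by exact_mod_cast hk3
        split_ifs at hE1 <;> linarith
      interval_cases k
      right; left; refine ⟨rfl, ?_⟩
      have hA : ∀ v : ZMod N, c (v + 1) ≠ c v := by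
        intro v heq
        have hE := E v (c v)
        rw [if_pos (show c v = c v from rfl), if_pos heq] at hE
        split_ifs at hE <;> norm_num at hE
      exact flip_gen hA (by rw [nsmul_eq_mul, ZMod.natCast_self, zero_mul])

end classify

section constructions

variable {N : ℕ} [NeZero N]

lemma mem_one (hN : 3 ≤ N) :
    1 ∈ {k | ∃ c : ZMod N → Fin k, ∃ α : ℝ, IsFATColoring (cycleGraph' N) k c α} := by
  refine ⟨fun _ => (0 : Fin 1), 0, fun i => ⟨0, Subsingleton.elim _ _⟩, le_refl _, zero_le_one, ?_⟩
  intro v i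
  have hi : i = 0 := Subsingleton.elim _ _
  subst hi
  rw [Finset.filter_true_of_mem (fun w _ => Subsingleton.elim _ _)]
  simp

lemma mem_two (hN : 3 ≤ N) (h2 : 2 ∣ N) :
    2 ∈ {k | ∃ c : ZMod N → Fin k, ∃ α : ℝ, IsFATColoring (cycleGraph' N) k c α} := by
  set f := ZMod.castHom h2 (ZMod 2) with hf
  refine ⟨(⇑f : ZMod N → ZMod 2), 1, ?_, zero_le_one, le_refl _, ?_⟩
  · intro i
    by_cases hi : i = f 0
    · exact ⟨0, hi.symm⟩
    · refine ⟨1, ?_⟩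
      have e0 : f 0 = 0 := map_zero f
      have e1 : f 1 = 1 := map_one f
      rw [e0] at hi
      rw [e1]
      revert hi
      have : ∀ j : Fin 2, j ≠ (0 : ZMod 2) → (1 : ZMod 2) = j := by intro j hj; fin_cases j; exacts [absurd rfl hj, rfl]
      exact this i
  · intro v i
    revert i
    show ∀ i : ZMod 2, (((@Finset.filter _ (fun w => f w = i) (fun w => ZMod.decidableEq 2 (f w) i)
      ((cycleGraph' N).neighborFinset v)).card : ℝ)) =
      (@ite ℝ (f v = i) (ZMod.decidableEq 2 (f v) i) (1 - (((2 : ℕ) : ℝ) - 1) * 1) 1) *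
        ((cycleGraph' N).degree v : ℝ)
    intro i
    rw [nbhd hN v, deg hN v, pair_filter hN v _]
    have e1 : f (v + 1) = f v + 1 := by rw [map_add, map_one]
    have e2 : f (v - 1) = f v + 1 := by
      rw [map_sub, map_one]
      have : ∀ a : ZMod 2, a - 1 = a + 1 := by decide
      exact this _
    have hne : ∀ a : ZMod 2, a + 1 ≠ a := by decide
    have hcases : ∀ a b : ZMod 2, a = b ∨ a = b + 1 := by decide
    rcases hcases i (f v) with hi | hi <;> subst hi
    · rw [if_pos (show f v = f v from rfl),
        if_neg (show ¬ f (v+1) = f v from by rw [e1]; exact hne _),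
        if_neg (show ¬ f (v-1) = f v from by rw [e2]; exact hne _)]
      norm_num
    · rw [if_neg (show ¬ f v = f v + 1 from fun hh => hne _ hh.symm), if_pos e1, if_pos e2]
      norm_num

lemma mem_three (hN : 3 ≤ N) (h3 : 3 ∣ N) :
    3 ∈ {k | ∃ c : ZMod N → Fin k, ∃ α : ℝ, IsFATColoring (cycleGraph' N) k c α} := by
  set f := ZMod.castHom h3 (ZMod 3) with hf
  refine ⟨(⇑f : ZMod N → ZMod 3), 1/2, ?_, by norm_num, by norm_num, ?_⟩
  · intro i
    have e0 : f 0 = 0 := map_zero f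
    have e1 : f 1 = 1 := map_one f
    have e2 : f 2 = 2 := by rw [show (2 : ZMod N) = 1 + 1 by norm_num, map_add, map_one]; decide
    have hcases : ∀ j : Fin 3, j = (0 : ZMod 3) ∨ j = (1 : ZMod 3) ∨ j = (2 : ZMod 3) := by decide
    rcases hcases i with hi | hi | hi
    · exact ⟨0, by rw [e0, hi]⟩
    · exact ⟨1, by rw [e1, hi]⟩
    · exact ⟨2, by rw [e2, hi]⟩
  · intro v i
    revert i
    show ∀ i : ZMod 3, (((@Finset.filter _ (fun w => f w = i) (fun w => ZMod.decidableEq 3 (f w) i)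
      ((cycleGraph' N).neighborFinset v)).card : ℝ)) =
      (@ite ℝ (f v = i) (ZMod.decidableEq 3 (f v) i) (1 - (((3 : ℕ) : ℝ) - 1) * (1/2)) (1/2)) *
        ((cycleGraph' N).degree v : ℝ)
    intro i
    rw [nbhd hN v, deg hN v, pair_filter hN v _]
    have e1 : f (v + 1) = f v + 1 := by rw [map_add, map_one]
    have e2 : f (v - 1) = f v + 2 := by
      rw [map_sub, map_one]
      have : ∀ a : ZMod 3, a - 1 = a + 2 := by decide
      exact this _
    have h10 : ∀ a : ZMod 3, a + 1 ≠ a := by decide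
    have h20 : ∀ a : ZMod 3, a + 2 ≠ a := by decide
    have h12 : ∀ a : ZMod 3, a + 1 ≠ a + 2 := by decide
    have hcases : ∀ a b : ZMod 3, a = b ∨ a = b + 1 ∨ a = b + 2 := by decide
    rcases hcases i (f v) with hi | hi | hi <;> subst hi
    · rw [if_pos (show f v = f v from rfl),
        if_neg (show ¬ f (v+1) = f v from by rw [e1]; exact h10 _),
        if_neg (show ¬ f (v-1) = f v from by rw [e2]; exact h20 _)]
      norm_num
    · rw [if_neg (show ¬ f v = f v + 1 from fun hh => h10 _ hh.symm), if_pos e1,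
        if_neg (show ¬ f (v-1) = f v + 1 from by rw [e2]; exact fun hh => h12 _ hh.symm)]
      norm_num
    · rw [if_neg (show ¬ f v = f v + 2 from fun hh => h20 _ hh.symm),
        if_neg (show ¬ f (v+1) = f v + 2 from by rw [e1]; exact h12 _), if_pos e2]
      norm_num

end constructions

theorem fat_cycle (N : ℕ) [NeZero N] (hN : 3 ≤ N) :
    (Odd N → ¬ (3 ∣ N) → fatChromatic (cycleGraph' N) = 1) ∧
      (Even N → ¬ (3 ∣ N) → fatChromatic (cycleGraph' N) = 2) ∧
      (3 ∣ N → fatChromatic (cycleGraph' N) = 3) := by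
  set S := {k | ∃ c : ZMod N → Fin k, ∃ α : ℝ, IsFATColoring (cycleGraph' N) k c α} with hS
  have hbdd : BddAbove S := by
    refine ⟨3, fun k hk => ?_⟩
    obtain ⟨c, α, hc⟩ := hk
    rcases classify hN hc with rfl | ⟨rfl, _⟩ | ⟨rfl, _⟩ <;> norm_num
  refine ⟨?_, ?_, ?_⟩
  · intro hodd h3
    refine le_antisymm (csSup_le ⟨1, mem_one hN⟩ ?_) (le_csSup hbdd (mem_one hN))
    intro k hk
    obtain ⟨c, α, hc⟩ := hk
    rcases classify hN hc with rfl | ⟨rfl, h⟩ | ⟨rfl, h⟩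
    · rfl
    · exact absurd (even_iff_two_dvd.mpr h) (Nat.not_even_iff_odd.mpr hodd)
    · exact absurd h h3
  · intro heven h3
    refine le_antisymm (csSup_le ⟨1, mem_one hN⟩ ?_) (le_csSup hbdd (mem_two hN (heven.two_dvd)))
    intro k hk
    obtain ⟨c, α, hc⟩ := hk
    rcases classify hN hc with rfl | ⟨rfl, h⟩ | ⟨rfl, h⟩
    · norm_num
    · rfl
    · exact absurd h h3
  · intro h3
    refine le_antisymm (csSup_le ⟨1, mem_one hN⟩ ?_) (le_csSup hbdd (mem_three hN h3))
    intro k hk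
    obtain ⟨c, α, hc⟩ := hk
    rcases classify hN hc with rfl | ⟨rfl, h⟩ | ⟨rfl, h⟩ <;> norm_num
end

section
/- Every tree on at least 2 vertices has FAT chromatic number exactly 2. -/
open Finset
open scoped Classical

lemma tree_adj_length {V : Type*} {G : SimpleGraph V} (h : G.IsAcyclic) {r u v : V}
    (huv : G.Adj u v) (p : G.Walk r u) (q : G.Walk r v) (hp : p.IsPath) (hq : q.IsPath) :
    q.length = p.length + 1 ∨ p.length = q.length + 1 := by
  classical
  by_cases hv : v ∈ p.support
  · right
    have hpath : q = p.takeUntil v hv := by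
      have := h.path_unique ⟨q, hq⟩ ⟨p.takeUntil v hv, hp.takeUntil hv⟩
      simpa using congrArg Subtype.val this
    have hedge : (SimpleGraph.Walk.cons huv.symm SimpleGraph.Walk.nil : G.Walk v u).IsPath := by
      simp [SimpleGraph.Walk.isPath_def, huv.ne']
    have hdrop : p.dropUntil v hv = SimpleGraph.Walk.cons huv.symm SimpleGraph.Walk.nil := by
      have := h.path_unique ⟨p.dropUntil v hv, hp.dropUntil hv⟩ ⟨_, hedge⟩
      simpa using congrArg Subtype.val this
    have hlen := congrArg SimpleGraph.Walk.length (p.take_spec hv)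
    rw [SimpleGraph.Walk.length_append, hdrop] at hlen
    simp only [SimpleGraph.Walk.length_cons, SimpleGraph.Walk.length_nil] at hlen
    rw [hpath]
    omega
  · left
    have hcp : (p.concat huv).IsPath := by
      rw [SimpleGraph.Walk.isPath_def, SimpleGraph.Walk.support_concat,
        List.nodup_append]
      exact ⟨hp.support_nodup, by simp, by
        intro a ha b hb hab; simp only [List.mem_singleton] at hb; subst hb hab; exact hv ha⟩
    have : q = p.concat huv := by
      have := h.path_unique ⟨q, hq⟩ ⟨_, hcp⟩
      simpa using congrArg Subtype.val this
    rw [this, SimpleGraph.Walk.length_concat]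

lemma exists_leaf {V : Type*} [Fintype V] (G : SimpleGraph V)
    (hconn : G.Connected) (hacyclic : G.IsAcyclic)
    (hcard : 2 ≤ Fintype.card V) : ∃ v, G.degree v = 1 := by
  classical
  have hT : G.IsTree := ⟨hconn, hacyclic⟩
  have hE : G.edgeFinset.card + 1 = Fintype.card V := hT.card_edgeFinset
  have hsum : ∑ v, G.degree v = 2 * G.edgeFinset.card := G.sum_degrees_eq_twice_card_edges
  by_contra hno
  push_neg at hno
  have hpos : ∀ v : V, 1 ≤ G.degree v := by
    intro v
    rw [Nat.one_le_iff_ne_zero, ← Nat.pos_iff_ne_zero, SimpleGraph.degree_pos_iff_exists_adj]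
    obtain ⟨w, hw⟩ := Fintype.exists_ne_of_one_lt_card (by omega) v
    obtain ⟨p⟩ := hconn.preconnected v w
    cases p with
    | nil => exact absurd rfl hw.symm
    | cons h _ => exact ⟨_, h⟩
  have h2 : ∀ v : V, 2 ≤ G.degree v := by
    intro v
    have := hpos v; have := hno v; omega
  have hge : 2 * Fintype.card V ≤ ∑ v, G.degree v := by
    calc 2 * Fintype.card V = ∑ _v : V, 2 := by simp [mul_comm]
      _ ≤ ∑ v, G.degree v := Finset.sum_le_sum fun v _ => h2 v
  omega

lemma fin2_eq {a b c : Fin 2} (h1 : a ≠ b) (h2 : c ≠ b) : a = c := by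
  fin_cases a <;> fin_cases b <;> fin_cases c <;> simp_all

theorem fat_tree {V : Type*} [Fintype V] (G : SimpleGraph V)
    (hconn : G.Connected) (hacyclic : G.IsAcyclic)
    (hcard : 2 ≤ Fintype.card V) : fatChromatic G = 2 := by
  classical
  have hT : G.IsTree := ⟨hconn, hacyclic⟩
  obtain ⟨r⟩ : Nonempty V := Fintype.card_pos_iff.mp (by omega)
  have hP : ∀ v : V, ∃ p : G.Walk r v, p.IsPath := fun v =>
    ⟨(hT.existsUnique_path r v).choose, (hT.existsUnique_path r v).choose_spec.1⟩
  let c2 : V → Fin 2 := fun v => ⟨(hP v).choose.length % 2, Nat.mod_lt _ (by omega)⟩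
  have hadj : ∀ u v : V, G.Adj u v → c2 u ≠ c2 v := by
    intro u v huv h
    have := tree_adj_length hacyclic huv (hP u).choose (hP v).choose
      (hP u).choose_spec (hP v).choose_spec
    have hval : (hP u).choose.length % 2 = (hP v).choose.length % 2 :=
      congrArg Fin.val h
    omega
  have hrd : 0 < G.degree r := by
    rw [SimpleGraph.degree_pos_iff_exists_adj]
    obtain ⟨w, hw⟩ := Fintype.exists_ne_of_one_lt_card (by omega) r
    obtain ⟨p⟩ := hconn.preconnected r w
    cases p with
    | nil => exact absurd rfl hw.symm
    | cons h _ => exact ⟨_, h⟩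
  obtain ⟨w0, hw0⟩ := (G.degree_pos_iff_exists_adj r).mp hrd
  have h2S : 2 ∈ {k | ∃ c : V → Fin k, ∃ α : ℝ, IsFATColoring G k c α} := by
    refine ⟨c2, 1, ?_, by norm_num, le_refl 1, ?_⟩
    · intro i
      by_cases h : c2 r = i
      · exact ⟨r, h⟩
      · exact ⟨w0, fin2_eq (hadj r w0 hw0).symm (Ne.symm h)⟩
    · intro v i
      by_cases h : c2 v = i
      · rw [if_pos h]
        have he : ((G.neighborFinset v).filter (fun w => c2 w = i)) = ∅ := by
          apply Finset.filter_eq_empty_iff.mpr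
          intro w hw hwi
          rw [SimpleGraph.mem_neighborFinset] at hw
          exact hadj v w hw (h.trans hwi.symm)
        rw [he]
        norm_num
      · rw [if_neg h]
        have he : ((G.neighborFinset v).filter (fun w => c2 w = i)) = G.neighborFinset v := by
          apply Finset.filter_true_of_mem
          intro w hw
          rw [SimpleGraph.mem_neighborFinset] at hw
          exact fin2_eq ((hadj v w hw).symm) (Ne.symm h)
        rw [he, one_mul, SimpleGraph.degree]
  have hbound : ∀ k ∈ {k | ∃ c : V → Fin k, ∃ α : ℝ, IsFATColoring G k c α}, k ≤ 2 := by
    rintro k ⟨c, α, hsurj, hα0, hα1, hcond⟩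
    by_contra hk
    push_neg at hk
    have hk3 : 3 ≤ k := hk
    obtain ⟨v, hv⟩ := exists_leaf G hconn hacyclic hcard
    obtain ⟨i, hi⟩ := Fintype.exists_ne_of_one_lt_card (by simp; omega) (c v)
    have hαval := hcond v i
    rw [if_neg (Ne.symm hi), hv] at hαval
    -- α = card ∈ ℕ
    have hcases : α = 0 ∨ α = 1 := by
      set m := ((G.neighborFinset v).filter (fun w => c w = i)).card with hm
      have : (m : ℝ) = α := by rw [hαval]; ring
      have hm1 : m ≤ 1 := by
        by_contra hc
        push_neg at hc
        have h2m : (2 : ℝ) ≤ (m : ℝ) := by exact_mod_cast hc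
        linarith
      interval_cases m
      · left; push_cast at this; linarith
      · right; push_cast at this; linarith
    rcases hcases with h0 | h1
    · -- α = 0 : coloring constant, contradicts surjectivity with k ≥ 3
      have hstep : ∀ a b : V, G.Adj a b → c a = c b := by
        intro a b hab
        by_contra hne
        have := hcond a (c b)
        rw [if_neg hne, h0, zero_mul] at this
        have hb : b ∈ (G.neighborFinset a).filter (fun w => c w = c b) := by
          simp [SimpleGraph.mem_neighborFinset, hab]
        have : ((G.neighborFinset a).filter (fun w => c w = c b)).card = 0 := by
          exact_mod_cast this
        rw [Finset.card_eq_zero] at this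
        rw [this] at hb
        exact absurd hb (Finset.notMem_empty b)
      have hwalk : ∀ (a b : V) (p : G.Walk a b), c a = c b := by
        intro a b p
        induction p with
        | nil => rfl
        | cons h q ih => exact (hstep _ _ h).trans ih
      have hconst : ∀ v : V, c v = c r := fun v =>
        (hwalk r v (hconn.preconnected r v).some).symm
      obtain ⟨j, hj⟩ := Fintype.exists_ne_of_one_lt_card (show 1 < Fintype.card (Fin k) by simp; omega) (c r)
      obtain ⟨w, hw⟩ := hsurj j
      exact hj ((hw ▸ hconst w : c w = c r) ▸ hw ▸ rfl)
    · -- α = 1 : own-class count negative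
      have := hcond v (c v)
      rw [if_pos rfl, hv, h1] at this
      have hge : (0 : ℝ) ≤ ((G.neighborFinset v).filter (fun w => c w = c v)).card := by positivity
      have hk3' : (3 : ℝ) ≤ (k : ℝ) := by exact_mod_cast hk3
      push_cast at this
      linarith
  have hbdd : BddAbove {k | ∃ c : V → Fin k, ∃ α : ℝ, IsFATColoring G k c α} := ⟨2, hbound⟩
  exact le_antisymm (csSup_le ⟨2, h2S⟩ hbound) (le_csSup hbdd h2S)
end

section
/- For m ≥ 1, the m-book graph (vertex set {x, y, v_1,...,v_m, w_1,...,w_m} with edges x∼v_i, y∼w_i, v_i∼w_i for all i) has FAT chromatic number 2 if m is odd and 3 if m is even. -/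
open Finset
open scoped Classical

/-- The `m`-book graph: `x = Sum.inl false`, `y = Sum.inl true`,
`vᵢ = Sum.inr (i, false)`, `wᵢ = Sum.inr (i, true)`;
edges `x∼vᵢ`, `y∼wᵢ`, `vᵢ∼wᵢ`. -/
def bookGraph (m : ℕ) : SimpleGraph (Bool ⊕ (Fin m × Bool)) :=
  SimpleGraph.fromRel
    (fun a b =>
      (∃ i : Fin m, a = Sum.inl false ∧ b = Sum.inr (i, false)) ∨
      (∃ i : Fin m, a = Sum.inl true ∧ b = Sum.inr (i, true)) ∨
      (∃ i : Fin m, a = Sum.inr (i, false) ∧ b = Sum.inr (i, true)))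

variable (m : ℕ)

lemma nbhd_x : (bookGraph m).neighborFinset (Sum.inl false) =
    univ.image (fun i : Fin m => Sum.inr (i, false)) := by
  ext w
  rw [SimpleGraph.mem_neighborFinset]
  simp only [SimpleGraph.mem_neighborFinset, bookGraph, SimpleGraph.fromRel_adj, mem_image,
    mem_univ, true_and]
  rcases w with b | ⟨i, b⟩ <;> cases b <;> simp

lemma nbhd_y : (bookGraph m).neighborFinset (Sum.inl true) =
    univ.image (fun i : Fin m => Sum.inr (i, true)) := by
  ext w
  rw [SimpleGraph.mem_neighborFinset]
  simp only [SimpleGraph.mem_neighborFinset, bookGraph, SimpleGraph.fromRel_adj, mem_image,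
    mem_univ, true_and]
  rcases w with b | ⟨i, b⟩ <;> cases b <;> simp

lemma nbhd_v (i : Fin m) : (bookGraph m).neighborFinset (Sum.inr (i, false)) =
    {Sum.inl false, Sum.inr (i, true)} := by
  ext w
  rw [SimpleGraph.mem_neighborFinset]
  simp only [SimpleGraph.mem_neighborFinset, bookGraph, SimpleGraph.fromRel_adj, mem_insert,
    mem_singleton]
  rcases w with b | ⟨j, b⟩ <;> cases b <;> simp [eq_comm, Prod.ext_iff]

lemma nbhd_w (i : Fin m) : (bookGraph m).neighborFinset (Sum.inr (i, true)) =
    {Sum.inl true, Sum.inr (i, false)} := by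
  ext w
  rw [SimpleGraph.mem_neighborFinset]
  simp only [SimpleGraph.mem_neighborFinset, bookGraph, SimpleGraph.fromRel_adj, mem_insert,
    mem_singleton]
  rcases w with b | ⟨j, b⟩ <;> cases b <;> simp [eq_comm, Prod.ext_iff]

lemma inj_f (b : Bool) : Function.Injective (fun i : Fin m => (Sum.inr (i, b) : Bool ⊕ (Fin m × Bool))) := by
  intro a b h; simpa using h

lemma deg_x : (bookGraph m).degree (Sum.inl false) = m := by
  rw [← SimpleGraph.card_neighborFinset_eq_degree, nbhd_x,
    Finset.card_image_of_injective _ (inj_f m false), card_univ, Fintype.card_fin]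

lemma deg_y : (bookGraph m).degree (Sum.inl true) = m := by
  rw [← SimpleGraph.card_neighborFinset_eq_degree, nbhd_y,
    Finset.card_image_of_injective _ (inj_f m true), card_univ, Fintype.card_fin]

lemma deg_v (i : Fin m) : (bookGraph m).degree (Sum.inr (i, false)) = 2 := by
  rw [← SimpleGraph.card_neighborFinset_eq_degree, nbhd_v]
  simp

lemma deg_w (i : Fin m) : (bookGraph m).degree (Sum.inr (i, true)) = 2 := by
  rw [← SimpleGraph.card_neighborFinset_eq_degree, nbhd_w]
  simp

/-- the 2-coloring -/
noncomputable def c2 : Bool ⊕ (Fin m × Bool) → Fin 2 :=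
  fun v => match v with
  | Sum.inl b => if b then 1 else 0
  | Sum.inr (_, b) => if b then 0 else 1

lemma two_mem : ∃ c : Bool ⊕ (Fin m × Bool) → Fin 2, ∃ α : ℝ,
    IsFATColoring (bookGraph m) 2 c α := by
  refine ⟨c2 m, 1, ?_, by norm_num, le_refl 1, ?_⟩
  · intro i
    fin_cases i
    · exact ⟨Sum.inl false, rfl⟩
    · exact ⟨Sum.inl true, rfl⟩
  · intro v i
    rcases v with b | ⟨j, b⟩ <;> cases b <;> fin_cases i <;>
      simp [c2, nbhd_x, nbhd_y, nbhd_v, nbhd_w, filter_image, deg_x, deg_y, deg_v, deg_w,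
        Finset.filter_insert, Finset.filter_singleton,
        Finset.card_image_of_injective _ (inj_f m _), SimpleGraph.degree] <;> norm_num

section H
variable (m : ℕ)



lemma card_lt (n : ℕ) (h : n ≤ m) :
    (univ.filter (fun i : Fin m => (i : ℕ) < n)).card = n := by
  have : (univ.filter (fun i : Fin m => (i : ℕ) < n)) =
      (range n).attachFin (fun x hx => lt_of_lt_of_le (mem_range.1 hx) h) := by
    ext i; simp [Finset.mem_attachFin]
  rw [this, Finset.card_attachFin, card_range]

lemma card_ge (n : ℕ) (h : n ≤ m) :
    (univ.filter (fun i : Fin m => ¬ (i : ℕ) < n)).card = m - n := by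
  rw [filter_not, card_sdiff_of_subset (filter_subset _ _), card_lt m n h, card_univ, Fintype.card_fin]

lemma card_ite (n : ℕ) (h : n ≤ m) (a b i₀ : Fin 3) (hab : a ≠ b) :
    (univ.filter (fun j : Fin m => (if (j : ℕ) < n then a else b) = i₀)).card =
      if i₀ = a then n else if i₀ = b then m - n else 0 := by
  rcases eq_or_ne i₀ a with rfl | ha
  · have e : (univ.filter (fun j : Fin m => (if (j : ℕ) < n then i₀ else b) = i₀)) =
        univ.filter (fun j : Fin m => (j : ℕ) < n) :=
      filter_congr (fun j _ => by by_cases hj : (j : ℕ) < n <;> simp [hj, hab, Ne.symm hab])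
    rw [if_pos rfl, e, card_lt m n h]
  · rcases eq_or_ne i₀ b with rfl | hb
    · have e : (univ.filter (fun j : Fin m => (if (j : ℕ) < n then a else i₀) = i₀)) =
          univ.filter (fun j : Fin m => ¬ (j : ℕ) < n) :=
        filter_congr (fun j _ => by
          by_cases hj : (j : ℕ) < n <;> simp [hj, hab, Ne.symm hab, ha, Ne.symm ha])
      rw [if_neg ha, if_pos rfl, e, card_ge m n h]
    · have e : (univ.filter (fun j : Fin m => (if (j : ℕ) < n then a else b) = i₀)) = ∅ :=
        filter_false_of_mem (fun j _ => by
          by_cases hj : (j : ℕ) < n <;> simp [hj, Ne.symm ha, Ne.symm hb])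
      rw [if_neg ha, if_neg hb, e, card_empty]
end H

/-- the 3-coloring, for `m = 2n` -/
noncomputable def c3 (m n : ℕ) : Bool ⊕ (Fin m × Bool) → Fin 3 :=
  fun v => match v with
  | Sum.inl _ => 0
  | Sum.inr (i, false) => if (i : ℕ) < n then 1 else 2
  | Sum.inr (i, true) => if (i : ℕ) < n then 2 else 1

lemma three_mem (m n : ℕ) (hn : 1 ≤ n) (hmn : m = 2 * n) :
    ∃ c : Bool ⊕ (Fin m × Bool) → Fin 3, ∃ α : ℝ,
    IsFATColoring (bookGraph m) 3 c α := by
  have hnm : n ≤ m := by omega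
  have h0 : (0 : ℕ) < m := by omega
  refine ⟨c3 m n, 1/2, ?_, by norm_num, by norm_num, ?_⟩
  · intro i
    fin_cases i
    · exact ⟨Sum.inl false, rfl⟩
    · exact ⟨Sum.inr (⟨0, h0⟩, false), by simp [c3]; omega⟩
    · exact ⟨Sum.inr (⟨0, h0⟩, true), by simp [c3]; omega⟩
  · intro v i
    have hcast : ((m : ℝ)) = 2 * n := by exact_mod_cast congrArg (Nat.cast : ℕ → ℝ) hmn
    have hsub : ((m - n : ℕ) : ℝ) = n := by
      push_cast [Nat.cast_sub hnm]; rw [hcast]; ring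
    rcases v with b | ⟨j, b⟩
    · cases b
      · -- x
        rw [nbhd_x, deg_x, filter_image, Finset.card_image_of_injective _ (inj_f m false)]
        have e : (univ.filter (fun a : Fin m => c3 m n (Sum.inr (a, false)) = i)) =
            univ.filter (fun j : Fin m => (if (j : ℕ) < n then (1 : Fin 3) else 2) = i) := rfl
        rw [e, card_ite m n hnm 1 2 i (by decide)]
        have hcx : c3 m n (Sum.inl false) = 0 := rfl
        rw [hcx]
        fin_cases i <;> norm_num [hsub, hcast, Fin.ext_iff] <;> ring
      · -- y
        rw [nbhd_y, deg_y, filter_image, Finset.card_image_of_injective _ (inj_f m true)]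
        have e : (univ.filter (fun a : Fin m => c3 m n (Sum.inr (a, true)) = i)) =
            univ.filter (fun j : Fin m => (if (j : ℕ) < n then (2 : Fin 3) else 1) = i) := rfl
        rw [e, card_ite m n hnm 2 1 i (by decide)]
        have hcy : c3 m n (Sum.inl true) = 0 := rfl
        rw [hcy]
        fin_cases i <;> norm_num [hsub, hcast, Fin.ext_iff] <;> ring
    · cases b <;> fin_cases i <;> by_cases hj : (j : ℕ) < n <;>
        simp [c3, nbhd_v, nbhd_w, deg_v, deg_w, filter_insert, filter_singleton, hj] <;> norm_num

section upper
variable (m : ℕ)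

lemma adj_xv (j : Fin m) : (bookGraph m).Adj (Sum.inl false) (Sum.inr (j, false)) := by
  rw [← SimpleGraph.mem_neighborFinset, nbhd_x]; simp

lemma adj_yw (j : Fin m) : (bookGraph m).Adj (Sum.inl true) (Sum.inr (j, true)) := by
  rw [← SimpleGraph.mem_neighborFinset, nbhd_y]; simp

lemma adj_vw (j : Fin m) : (bookGraph m).Adj (Sum.inr (j, false)) (Sum.inr (j, true)) := by
  rw [← SimpleGraph.mem_neighborFinset, nbhd_v]; simp

lemma exists_ne_fin {k : ℕ} (hk : 2 ≤ k) (a : Fin k) : ∃ i : Fin k, i ≠ a := by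
  rcases eq_or_ne a ⟨0, by omega⟩ with h | h
  · exact ⟨⟨1, by omega⟩, by rw [h]; simp [Fin.ext_iff]⟩
  · exact ⟨⟨0, by omega⟩, Ne.symm h⟩

/-- if α = 0, all neighbours share the colour -/
lemma nbr_color {V : Type*} [Fintype V] {G : SimpleGraph V} {k : ℕ} {c : V → Fin k} {α : ℝ}
    (h : IsFATColoring G k c α) (hα : α = 0) {v w : V} (hw : G.Adj v w) : c w = c v := by
  obtain ⟨-, -, -, hcond⟩ := h
  have h1 := hcond v (c v)
  rw [if_pos rfl, hα] at h1
  have h2 : (((G.neighborFinset v).filter (fun w => c w = c v)).card : ℝ) =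
      ((G.neighborFinset v).card : ℝ) := by
    rw [h1, SimpleGraph.card_neighborFinset_eq_degree]; ring
  exact Finset.filter_card_eq (by exact_mod_cast h2) w (by rwa [SimpleGraph.mem_neighborFinset])

lemma alpha_ne_zero {k : ℕ} {c : Bool ⊕ (Fin m × Bool) → Fin k} {α : ℝ} (hm : 1 ≤ m)
    (hk : 2 ≤ k) (h : IsFATColoring (bookGraph m) k c α) : α ≠ 0 := by
  intro hα
  have key : ∀ u, c u = c (Sum.inl false) := by
    have hx : ∀ j : Fin m, c (Sum.inr (j, false)) = c (Sum.inl false) :=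
      fun j => nbr_color h hα (adj_xv m j)
    have hw : ∀ j : Fin m, c (Sum.inr (j, true)) = c (Sum.inl false) :=
      fun j => (nbr_color h hα (adj_vw m j)).trans (hx j)
    intro u
    rcases u with b | ⟨j, b⟩
    · cases b
      · rfl
      · exact ((nbr_color h hα (adj_yw m ⟨0, hm⟩)).symm).trans (hw ⟨0, hm⟩)
    · cases b
      · exact hx j
      · exact hw j
  obtain ⟨i, hi⟩ := exists_ne_fin hk (c (Sum.inl false))
  obtain ⟨u, hu⟩ := h.1 i
  exact hi (hu ▸ key u)

lemma alpha_ge_half {k : ℕ} {c : Bool ⊕ (Fin m × Bool) → Fin k} {α : ℝ} (hm : 1 ≤ m)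
    (hk : 2 ≤ k) (h : IsFATColoring (bookGraph m) k c α) : 1 ≤ 2 * α := by
  have hα0 : 0 < α := lt_of_le_of_ne h.2.1 (Ne.symm (alpha_ne_zero m hm hk h))
  set v0 : Bool ⊕ (Fin m × Bool) := Sum.inr (⟨0, hm⟩, false)
  obtain ⟨i, hi⟩ := exists_ne_fin hk (c v0)
  have h1 := h.2.2.2 v0 i
  rw [if_neg (fun hh => hi hh.symm), deg_v] at h1
  set N : ℕ := (((bookGraph m).neighborFinset v0).filter (fun w => c w = i)).card with hN
  have hNpos : 1 ≤ N := by
    rcases Nat.eq_zero_or_pos N with h0 | h0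
    · rw [h0] at h1; norm_num at h1; nlinarith
    · exact h0
  have : (1 : ℝ) ≤ N := by exact_mod_cast hNpos
  rw [h1] at this
  push_cast at this
  linarith

lemma kalpha_le_one {k : ℕ} {c : Bool ⊕ (Fin m × Bool) → Fin k} {α : ℝ} (hm : 1 ≤ m)
    (h : IsFATColoring (bookGraph m) k c α) : ((k : ℝ) - 1) * α ≤ 1 := by
  set v0 : Bool ⊕ (Fin m × Bool) := Sum.inr (⟨0, hm⟩, false)
  have h1 := h.2.2.2 v0 (c v0)
  rw [if_pos rfl, deg_v] at h1
  push_cast at h1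
  have : (0 : ℝ) ≤ (1 - ((k : ℝ) - 1) * α) * 2 := by
    rw [← h1]; positivity
  linarith

lemma mem_le_three (hm : 1 ≤ m) {k : ℕ}
    (hk : ∃ c : Bool ⊕ (Fin m × Bool) → Fin k, ∃ α : ℝ, IsFATColoring (bookGraph m) k c α) :
    k ≤ 3 := by
  by_contra hk4
  push_neg at hk4
  obtain ⟨c, α, h⟩ := hk
  have h2 : 2 ≤ k := by omega
  have ha := alpha_ge_half m hm h2 h
  have hb := kalpha_le_one m hm h
  have hk4' : (4 : ℝ) ≤ (k : ℝ) := by exact_mod_cast hk4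
  nlinarith

lemma three_not_mem_of_odd (hm : 1 ≤ m) (hodd : Odd m) :
    ¬ ∃ c : Bool ⊕ (Fin m × Bool) → Fin 3, ∃ α : ℝ, IsFATColoring (bookGraph m) 3 c α := by
  rintro ⟨c, α, h⟩
  have ha := alpha_ge_half m hm (by norm_num) h
  have hb := kalpha_le_one m hm h
  have hα : α = 1 / 2 := by push_cast at hb; linarith
  obtain ⟨i, hi⟩ := exists_ne_fin (by norm_num) (c (Sum.inl false))
  have h1 := h.2.2.2 (Sum.inl false) i
  rw [if_neg (fun hh => hi hh.symm), deg_x, hα] at h1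
  set N : ℕ := (((bookGraph m).neighborFinset (Sum.inl false)).filter (fun w => c w = i)).card
  have : (2 * N : ℝ) = m := by rw [h1]; ring
  have : 2 * N = m := by exact_mod_cast this
  rw [Nat.odd_iff] at hodd
  omega

end upper


theorem fat_book (m : ℕ) (hm : 1 ≤ m) :
    (Odd m → fatChromatic (bookGraph m) = 2) ∧
      (Even m → fatChromatic (bookGraph m) = 3) := by
  have hbdd : BddAbove {k | ∃ c : Bool ⊕ (Fin m × Bool) → Fin k, ∃ α : ℝ,
      IsFATColoring (bookGraph m) k c α} := ⟨3, fun k hk => mem_le_three m hm hk⟩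
  have h2S : (2 : ℕ) ∈ {k | ∃ c : Bool ⊕ (Fin m × Bool) → Fin k, ∃ α : ℝ,
      IsFATColoring (bookGraph m) k c α} := two_mem m
  constructor
  · intro hodd
    unfold fatChromatic
    apply le_antisymm
    · apply csSup_le ⟨2, h2S⟩
      intro k hk
      have h3 := mem_le_three m hm hk
      have : k ≠ 3 := by rintro rfl; exact three_not_mem_of_odd m hm hodd hk
      omega
    · exact le_csSup hbdd h2S
  · intro heven
    obtain ⟨n, hn⟩ := heven
    have h3S : (3 : ℕ) ∈ {k | ∃ c : Bool ⊕ (Fin m × Bool) → Fin k, ∃ α : ℝ,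
        IsFATColoring (bookGraph m) k c α} := three_mem m n (by omega) (by omega)
    unfold fatChromatic
    apply le_antisymm
    · exact csSup_le ⟨3, h3S⟩ (fun k hk => mem_le_three m hm hk)
    · exact le_csSup hbdd h3S
end

section
/- Let T(N,t) be the regular Turán graph with parts P_1,...,P_t of equal size N/t. In any FAT coloring, if a Turán part P_g intersects two distinct coloring classes V_i and V_j, then P_g intersects every coloring class. -/
open Finset
open scoped Classical

/-- The regular Turán graph with `t` parts of size `n`: vertices `(g, x) : Fin t × Fin n`,
adjacent iff they lie in different parts (different first coordinates).
The part `P_g` is `{a | a.1 = g}`. -/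
def regTuran (t n : ℕ) : SimpleGraph (Fin t × Fin n) :=
  SimpleGraph.fromRel (fun a b => a.1 ≠ b.1)

lemma regTuran_adj {t n : ℕ} (a b : Fin t × Fin n) :
    (regTuran t n).Adj a b ↔ a.1 ≠ b.1 := by
  simp only [regTuran, SimpleGraph.fromRel_adj]
  constructor
  · rintro ⟨_, h | h⟩
    · exact h
    · exact h.symm
  · intro h
    exact ⟨fun he => h (congrArg Prod.fst he), Or.inl h⟩

lemma regTuran_nbr {t n : ℕ} (v : Fin t × Fin n) :
    (regTuran t n).neighborFinset v = univ.filter (fun w => w.1 ≠ v.1) := by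
  ext w
  simp [SimpleGraph.mem_neighborFinset, regTuran_adj, ne_comm]

lemma part_card {t n : ℕ} (p : Fin t) :
    (univ.filter (fun w : Fin t × Fin n => w.1 = p)).card = n := by
  have h : (univ.filter (fun w : Fin t × Fin n => w.1 = p)) = {p} ×ˢ univ := by
    ext w
    simp only [Finset.mem_filter, Finset.mem_univ, true_and, Finset.mem_product,
      Finset.mem_singleton]
    exact ⟨fun h => ⟨h, trivial⟩, fun h => h.1⟩
  rw [h]
  simp

lemma regTuran_degree_eq {t n : ℕ} (v w : Fin t × Fin n) :
    (regTuran t n).degree v = (regTuran t n).degree w := by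
  have h : ∀ u : Fin t × Fin n,
      (regTuran t n).degree u = Fintype.card (Fin t × Fin n) - n := by
    intro u
    have h2 := Finset.card_filter_add_card_filter_not
      (s := (univ : Finset (Fin t × Fin n))) (p := fun w => w.1 = u.1)
    rw [part_card, Finset.card_univ] at h2
    rw [SimpleGraph.degree, regTuran_nbr]
    simp only [ne_eq] at *
    omega
  rw [h v, h w]

theorem turan_part_meets_all_classes (N t : ℕ) (ht : 0 < t) (hdvd : t ∣ N)
    (k : ℕ) (c : Fin t × Fin (N / t) → Fin k) (α : ℝ)
    (h : IsFATColoring (regTuran t (N / t)) k c α)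
    (g : Fin t) (i j : Fin k) (hij : i ≠ j)
    (hi : ∃ a : Fin t × Fin (N / t), c a = i ∧ a.1 = g)
    (hj : ∃ a : Fin t × Fin (N / t), c a = j ∧ a.1 = g) :
    ∀ z : Fin k, ∃ a : Fin t × Fin (N / t), c a = z ∧ a.1 = g := by
  obtain ⟨a, hca, hag⟩ := hi
  obtain ⟨b, hcb, hbg⟩ := hj
  obtain ⟨hsurj, hα0, hα1, hfat⟩ := h
  have hcount : ∀ (v : Fin t × Fin (N / t)) (m : Fin k),
      (((univ.filter (fun w => c w = m ∧ w.1 ≠ v.1)).card : ℝ))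
        = (if c v = m then 1 - ((k : ℝ) - 1) * α else α)
            * ((regTuran t (N / t)).degree v : ℝ) := by
    intro v m
    have hnf : ((regTuran t (N / t)).neighborFinset v).filter (fun w => c w = m)
        = univ.filter (fun w => c w = m ∧ w.1 ≠ v.1) := by
      rw [regTuran_nbr]
      ext w
      simp [Finset.mem_filter, and_comm]
    rw [← hnf]
    exact hfat v m
  have hsplit : ∀ (p : Fin t) (m : Fin k),
      (univ.filter (fun w : Fin t × Fin (N / t) => c w = m ∧ w.1 = p)).card
        + (univ.filter (fun w : Fin t × Fin (N / t) => c w = m ∧ w.1 ≠ p)).card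
        = (univ.filter (fun w : Fin t × Fin (N / t) => c w = m)).card := by
    intro p m
    have h2 := Finset.card_filter_add_card_filter_not
      (s := univ.filter (fun w : Fin t × Fin (N / t) => c w = m)) (p := fun w => w.1 = p)
    rw [Finset.filter_filter, Finset.filter_filter] at h2
    exact h2
  by_cases hd : (regTuran t (N / t)).degree a = 0
  · -- degenerate case: every vertex lies in part g
    intro z
    obtain ⟨u, hu⟩ := hsurj z
    refine ⟨u, hu, ?_⟩
    by_contra hne
    have hmem : u ∈ (univ.filter (fun w : Fin t × Fin (N / t) => w.1 ≠ a.1)) := by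
      simp only [Finset.mem_filter, Finset.mem_univ, true_and, hag]
      exact hne
    have hne0 : (univ.filter (fun w : Fin t × Fin (N / t) => w.1 ≠ a.1)).card ≠ 0 :=
      Finset.card_ne_zero_of_mem hmem
    rw [SimpleGraph.degree, regTuran_nbr] at hd
    exact hne0 hd
  · have hdpos : (0 : ℝ) < ((regTuran t (N / t)).degree a : ℝ) := by
      exact_mod_cast Nat.pos_of_ne_zero hd
    have hdeg : ∀ v : Fin t × Fin (N / t),
        ((regTuran t (N / t)).degree v : ℝ) = ((regTuran t (N / t)).degree a : ℝ) := by
      intro v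
      rw [regTuran_degree_eq v a]
    have hA := hcount a i
    rw [if_pos hca, hag] at hA
    have hB := hcount b i
    rw [if_neg (by rw [hcb]; exact fun he => hij he.symm), hbg, hdeg b] at hB
    have key : 1 - ((k : ℝ) - 1) * α = α := by
      have h3 := hA.symm.trans hB
      exact mul_right_cancel₀ (ne_of_gt hdpos) h3
    have hcount' : ∀ (v : Fin t × Fin (N / t)) (m : Fin k),
        (((univ.filter (fun w => c w = m ∧ w.1 ≠ v.1)).card : ℝ))
          = α * ((regTuran t (N / t)).degree a : ℝ) := by
      intro v m
      rw [hcount v m, hdeg v]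
      split_ifs
      · rw [key]
      · rfl
    intro z
    by_contra hz
    push_neg at hz
    obtain ⟨u, hu⟩ := hsurj z
    have hAg : (univ.filter (fun w : Fin t × Fin (N / t) => c w = z ∧ w.1 = g)).card = 0 := by
      rw [Finset.card_eq_zero, Finset.filter_eq_empty_iff]
      intro w _ hw
      exact hz w hw.1 hw.2
    have hgz := hsplit g z
    rw [hAg, zero_add] at hgz
    have huz := hsplit u.1 z
    have hu1 : 1 ≤ (univ.filter (fun w : Fin t × Fin (N / t) => c w = z ∧ w.1 = u.1)).card := by
      apply Finset.card_pos.mpr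
      exact ⟨u, by simp [hu]⟩
    have e1 : ((univ.filter (fun w : Fin t × Fin (N / t) => c w = z ∧ w.1 ≠ g)).card : ℝ)
        = α * ((regTuran t (N / t)).degree a : ℝ) := by
      have h4 := hcount' a z
      rwa [hag] at h4
    have e2 : ((univ.filter (fun w : Fin t × Fin (N / t) => c w = z ∧ w.1 ≠ u.1)).card : ℝ)
        = α * ((regTuran t (N / t)).degree a : ℝ) := hcount' u z
    have hcast : ((univ.filter (fun w : Fin t × Fin (N / t) => c w = z ∧ w.1 = u.1)).card : ℝ)
        + ((univ.filter (fun w : Fin t × Fin (N / t) => c w = z ∧ w.1 ≠ u.1)).card : ℝ)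
        = ((univ.filter (fun w : Fin t × Fin (N / t) => c w = z ∧ w.1 ≠ g)).card : ℝ) := by
      rw [← hgz] at huz
      exact_mod_cast congrArg (Nat.cast : ℕ → ℝ) huz
    have hu1' : (1 : ℝ)
        ≤ ((univ.filter (fun w : Fin t × Fin (N / t) => c w = z ∧ w.1 = u.1)).card : ℝ) := by
      exact_mod_cast hu1
    rw [e1, e2] at hcast
    linarith
end
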